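/- Let G be a finitely generated group that is a limit of hyperbolic groups. If the isoperimetric spectrum f_{G,X}(k,m,n) is essentially independent of k, i.e., equivalent under ∼ to a function in 𝓕 that depends on m and n only, then f_{G,X}(k,m,n) ∼ n/m. -/

import Mathlib

/-!
In a `δ`-hyperbolic group, a null-homotopic word `w` longer than the scale `m` contains a subword
of length `L ∈ [h, 3h]`, `h ≈ m / 8`, whose endpoints are at distance at most `7L/8`: otherwise,
cutting the loop into pieces of length about `h` yields a chain with long steps and small Gromov
products at the turns, which the four-point condition forces to make definite progress, so the
loop could not close up. Replacing that subword by a geodesic costs one relator of length at most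
`m` and shortens `w` by at least `h/8`; hence relators of length `≤ m` fill with area
`≲ 1 + |w|/m`.

If `G` is a limit of hyperbolic groups `G_j`, the finitely many relations of length `≤ k` already
hold in some `G_j`, so `f(k, m, n) ≲ n/m + 1` for each fixed `k` and all large `m`. Independence of
`k` moves this bound from one value of `k` to all of them: `f(k,·,·) ≼ g ≼ f(C,·,·) ≼ n/m`. The
opposite inequality `n/m ≼ f` is built into `≼`.
-/

open Function

namespace IsoSpecPaper

variable {ι : Type*} {G : Type*} [Group G]

/-- The (reduced) length of an element of a free group. -/
noncomputable def wnorm (w : FreeGroup ι) : ℕ :=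
  @FreeGroup.norm ι (Classical.decEq ι) w

/-- `triv φ k` : the set of words of length at most `k` in the generators
(and their inverses) representing the identity of `G` under the marking `φ`. -/
noncomputable def triv (φ : FreeGroup ι →* G) (k : ℕ) : Set (FreeGroup ι) :=
  {w | wnorm w ≤ k ∧ φ w = 1}

/-- `AreaLe R w l` : `w` is a product of `l` conjugates of elements of `R` or
their inverses in the free group. -/
def AreaLe (R : Set (FreeGroup ι)) (w : FreeGroup ι) (l : ℕ) : Prop :=
  ∃ L : List (FreeGroup ι × FreeGroup ι), L.length = l ∧
    (∀ p ∈ L, p.2 ∈ R ∨ p.2⁻¹ ∈ R) ∧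
    w = (L.map fun p => p.1⁻¹ * p.2 * p.1).prod

/-- The area of `w` with respect to the set of relators `R`. -/
noncomputable def area (R : Set (FreeGroup ι)) (w : FreeGroup ι) : ℕ :=
  sInf {l | AreaLe R w l}

/-- The isoperimetric spectrum of the marked group `(G, φ)`:
`isoSpec φ k m n = max { area_{S_m}(w) : w ∈ ⟪S_k⟫, ‖w‖ ≤ n }`. -/
noncomputable def isoSpec (φ : FreeGroup ι →* G) (k m n : ℕ) : ℕ :=
  sSup (area (triv φ m) '' {w | w ∈ Subgroup.normalClosure (triv φ k) ∧ wnorm w ≤ n})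

/-- The real-valued isoperimetric spectrum. -/
noncomputable def isoSpecR (φ : FreeGroup ι →* G) : ℕ → ℕ → ℕ → ℝ :=
  fun k m n => (isoSpec φ k m n : ℝ)

/-- The Dehn function of the presentation with relators `R`. -/
noncomputable def dehn (R : Set (FreeGroup ι)) (n : ℕ) : ℕ :=
  sSup (area R '' {w | w ∈ Subgroup.normalClosure R ∧ wnorm w ≤ n})

/-- The quasi-order `f ≼ g` on functions of triples `(k,m,n)` of positive integers
with `m ≥ k`. -/
def SpecLE (f g : ℕ → ℕ → ℕ → ℝ) : Prop :=
  ∃ C : ℕ, 0 < C ∧ ∀ k m n : ℕ, 0 < k → 0 < m → 0 < n → C * k ≤ m →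
    f k (C * m) n ≤ C * g (C * k) m (C * n) + C * (n : ℝ) / m + C

/-- Equivalence of isoperimetric functions: `f ∼ g`. -/
def SpecEquiv (f g : ℕ → ℕ → ℕ → ℝ) : Prop := SpecLE f g ∧ SpecLE g f

/-- The linear spectrum `(k,m,n) ↦ n/m`. -/
noncomputable def linSpec : ℕ → ℕ → ℕ → ℝ := fun _ m n => (n : ℝ) / m

/-- The word length of `g ∈ G` with respect to the marking `φ`. -/
noncomputable def wlen (φ : FreeGroup ι →* G) (g : G) : ℕ :=
  sInf {n | ∃ w : FreeGroup ι, wnorm w = n ∧ φ w = g}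

/-- The word metric on `G` with respect to the marking `φ`. -/
noncomputable def wdist (φ : FreeGroup ι →* G) (g h : G) : ℕ := wlen φ (g⁻¹ * h)

/-- Quasi-isometry of marked groups with respect to their word metrics. -/
noncomputable def QuasiIsometric {H : Type*} [Group H] {κ : Type*}
    (φ : FreeGroup ι →* G) (ψ : FreeGroup κ →* H) : Prop :=
  ∃ L : ℝ, 0 ≤ L ∧ ∃ (α : G → H) (β : H → G),
    (∀ x y : G, (wdist ψ (α x) (α y) : ℝ) ≤ L * wdist φ x y + L) ∧
    (∀ u v : H, (wdist φ (β u) (β v) : ℝ) ≤ L * wdist ψ u v + L) ∧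
    (∀ t : H, (wdist ψ (α (β t)) t : ℝ) ≤ L) ∧
    (∀ s : G, (wdist φ (β (α s)) s : ℝ) ≤ L)

/-- A (combinatorial) geodesic path of length `n` in the Cayley graph of `(G, φ)`:
consecutive vertices are at distance at most `1` and the endpoints are at
distance exactly `n`. -/
noncomputable def IsGeodesic (φ : FreeGroup ι →* G) {n : ℕ} (p : Fin (n + 1) → G) : Prop :=
  (∀ i : Fin n, wdist φ (p i.castSucc) (p i.succ) ≤ 1) ∧
  wdist φ (p 0) (p (Fin.last n)) = n

/-- Every vertex of the path `p` lies within distance `δ` of the set `A`. -/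
noncomputable def ThinAt (φ : FreeGroup ι →* G) (δ : ℝ) {n : ℕ}
    (p : Fin (n + 1) → G) (A : Set G) : Prop :=
  ∀ i, ∃ a ∈ A, (wdist φ (p i) a : ℝ) ≤ δ

/-- The Cayley graph of `(G, φ)` is `δ`-hyperbolic: every geodesic triangle is `δ`-thin. -/
noncomputable def HypConst (φ : FreeGroup ι →* G) (δ : ℝ) : Prop :=
  ∀ (n₁ n₂ n₃ : ℕ) (p : Fin (n₁ + 1) → G) (q : Fin (n₂ + 1) → G) (r : Fin (n₃ + 1) → G),
    IsGeodesic φ p → IsGeodesic φ q → IsGeodesic φ r →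
    p (Fin.last n₁) = q 0 → q (Fin.last n₂) = r 0 → r (Fin.last n₃) = p 0 →
    ThinAt φ δ p (Set.range q ∪ Set.range r) ∧
    ThinAt φ δ q (Set.range r ∪ Set.range p) ∧
    ThinAt φ δ r (Set.range p ∪ Set.range q)

/-- The marked group `(G, φ)` is hyperbolic. -/
noncomputable def IsHyperbolic (φ : FreeGroup ι →* G) : Prop :=
  ∃ δ : ℝ, 0 ≤ δ ∧ HypConst φ δ

/-- `G` (marked by `φ`) is a limit (direct limit) of hyperbolic groups. -/
noncomputable def LimitOfHyperbolic (φ : FreeGroup ι →* G) : Prop :=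
  Surjective φ ∧ ∃ R : ℕ → Set (FreeGroup ι),
    (∀ i j, i ≤ j → R i ⊆ R j) ∧
    φ.ker = Subgroup.normalClosure (⋃ i, R i) ∧
    ∀ i, IsHyperbolic (QuotientGroup.mk' (Subgroup.normalClosure (R i)))

/-- `G` (marked by `φ`) is well-approximated by hyperbolic groups. -/
noncomputable def WellApproximated (φ : FreeGroup ι →* G) : Prop :=
  Surjective φ ∧ ∃ R : ℕ → Set (FreeGroup ι),
    (∀ i j, i ≤ j → R i ⊆ R j) ∧
    φ.ker = Subgroup.normalClosure (⋃ i, R i) ∧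
    (∀ i, IsHyperbolic (QuotientGroup.mk' (Subgroup.normalClosure (R i)))) ∧
    ∃ C : ℕ, 0 < C ∧ ∀ i : ℕ, 0 < i →
      (∀ w : FreeGroup ι, wnorm w ≤ i → φ w = 1 →
        w ∈ Subgroup.normalClosure (R i)) ∧
      HypConst (QuotientGroup.mk' (Subgroup.normalClosure (R i))) ((C * i : ℕ) : ℝ)

theorem wnorm_one : wnorm (1 : FreeGroup ι) = 0 := @FreeGroup.norm_one ι (Classical.decEq ι)

theorem wnorm_inv (w : FreeGroup ι) : wnorm w⁻¹ = wnorm w :=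
  @FreeGroup.norm_inv_eq ι (Classical.decEq ι) w

theorem wnorm_mul_le (x y : FreeGroup ι) : wnorm (x * y) ≤ wnorm x + wnorm y :=
  @FreeGroup.norm_mul_le ι (Classical.decEq ι) x y

theorem wnorm_mk_le (l : List (ι × Bool)) : wnorm (FreeGroup.mk l) ≤ l.length :=
  @FreeGroup.norm_mk_le ι l (Classical.decEq ι)

theorem finite_setOf_wnorm_le [Finite ι] (k : ℕ) : {w : FreeGroup ι | wnorm w ≤ k}.Finite := by
  refine ((List.finite_length_le (ι × Bool) k).image FreeGroup.mk).subset fun w hw => ?_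
  exact ⟨@FreeGroup.toWord ι (Classical.decEq ι) w, hw,
    @FreeGroup.mk_toWord ι (Classical.decEq ι) w⟩

section Area

variable {R : Set (FreeGroup ι)} {w : FreeGroup ι} {l : ℕ}

theorem AreaLe.of_mem (h : w ∈ R) : AreaLe R w 1 :=
  ⟨[(1, w)], rfl, by simpa using Or.inl h, by simp⟩

theorem AreaLe.mul {x y : FreeGroup ι} {lx ly : ℕ} (hx : AreaLe R x lx) (hy : AreaLe R y ly) :
    AreaLe R (x * y) (lx + ly) := by
  obtain ⟨Lx, rfl, hmx, rfl⟩ := hx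
  obtain ⟨Ly, rfl, hmy, rfl⟩ := hy
  refine ⟨Lx ++ Ly, List.length_append, fun p hp => ?_, by simp⟩
  rcases List.mem_append.1 hp with h | h
  exacts [hmx p h, hmy p h]

theorem AreaLe.conj (c : FreeGroup ι) (h : AreaLe R w l) : AreaLe R (c⁻¹ * w * c) l := by
  obtain ⟨L, rfl, hm, rfl⟩ := h
  refine ⟨L.map fun p => (p.1 * c, p.2), List.length_map _, fun p hp => ?_, ?_⟩
  · obtain ⟨q, hq, rfl⟩ := List.mem_map.1 hp
    exact hm q hq
  clear hm
  induction L with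
  | nil => simp
  | cons p L ih =>
    simp only [List.map_cons, List.prod_cons] at ih ⊢
    rw [← ih]
    group

theorem AreaLe.mono {R' : Set (FreeGroup ι)} (hR : R ⊆ R') (h : AreaLe R w l) : AreaLe R' w l :=
  let ⟨L, hL, hm, hp⟩ := h
  ⟨L, hL, fun p hp => (hm p hp).imp (@hR _) (@hR _), hp⟩

theorem area_le (h : AreaLe R w l) : area R w ≤ l := Nat.sInf_le h

end Area

section WordMetric

variable {ψ : FreeGroup ι →* G}

theorem wlen_le_wnorm {g : G} {u : FreeGroup ι} (hu : ψ u = g) : wlen ψ g ≤ wnorm u :=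
  Nat.sInf_le ⟨u, rfl, hu⟩

theorem exists_wnorm_eq_wlen (hs : Surjective ψ) (g : G) :
    ∃ u : FreeGroup ι, wnorm u = wlen ψ g ∧ ψ u = g :=
  let ⟨u, hu⟩ := hs g
  Nat.sInf_mem (s := {n | ∃ w : FreeGroup ι, wnorm w = n ∧ ψ w = g}) ⟨wnorm u, u, rfl, hu⟩

theorem wlen_one : wlen ψ (1 : G) = 0 :=
  Nat.le_zero.1 (wnorm_one (ι := ι) ▸ wlen_le_wnorm (map_one ψ))

theorem wlen_inv_le (hs : Surjective ψ) (g : G) : wlen ψ g⁻¹ ≤ wlen ψ g := by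
  obtain ⟨u, hu, rfl⟩ := exists_wnorm_eq_wlen hs g
  exact hu ▸ wnorm_inv u ▸ wlen_le_wnorm (map_inv ψ u)

theorem wlen_mul_le (hs : Surjective ψ) (g h : G) : wlen ψ (g * h) ≤ wlen ψ g + wlen ψ h := by
  obtain ⟨u, hu, rfl⟩ := exists_wnorm_eq_wlen hs g
  obtain ⟨v, hv, rfl⟩ := exists_wnorm_eq_wlen hs h
  exact hu ▸ hv ▸ (wlen_le_wnorm (map_mul ψ u v)).trans (wnorm_mul_le u v)

theorem wdist_self (x : G) : wdist ψ x x = 0 := by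
  simp [wdist, wlen_one]

theorem wdist_comm (hs : Surjective ψ) (x y : G) : wdist ψ x y = wdist ψ y x := by
  have key : ∀ x y : G, wdist ψ x y ≤ wdist ψ y x := fun x y => by
    simpa [wdist] using wlen_inv_le hs (y⁻¹ * x)
  exact (key x y).antisymm (key y x)

theorem wdist_triangle (hs : Surjective ψ) (x y z : G) :
    wdist ψ x z ≤ wdist ψ x y + wdist ψ y z := by
  simpa [wdist, mul_assoc] using wlen_mul_le hs (x⁻¹ * y) (y⁻¹ * z)

theorem wdist_mul_left (c x y : G) : wdist ψ (c * x) (c * y) = wdist ψ x y := by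
  simp [wdist, mul_assoc]

theorem mk_take_add (l : List (ι × Bool)) (i L : ℕ) :
    FreeGroup.mk (l.take (i + L)) = FreeGroup.mk (l.take i) * FreeGroup.mk ((l.drop i).take L) := by
  rw [List.take_add, FreeGroup.mul_mk]

theorem wdist_take_le (l : List (ι × Bool)) (i L : ℕ) :
    wdist ψ (ψ (FreeGroup.mk (l.take i))) (ψ (FreeGroup.mk (l.take (i + L)))) ≤ L := by
  have hsub : ψ (FreeGroup.mk ((l.drop i).take L))
      = (ψ (FreeGroup.mk (l.take i)))⁻¹ * ψ (FreeGroup.mk (l.take (i + L))) := by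
    rw [mk_take_add, map_mul, inv_mul_cancel_left]
  calc wdist ψ _ _ ≤ wnorm (FreeGroup.mk ((l.drop i).take L)) := wlen_le_wnorm hsub
    _ ≤ _ := (wnorm_mk_le _).trans (List.length_take_le _ _)

theorem wdist_add_le_of_wdist_succ_le (hs : Surjective ψ) {q : ℕ → G}
    (hq : ∀ i, wdist ψ (q i) (q (i + 1)) ≤ 1) (i d : ℕ) : wdist ψ (q i) (q (i + d)) ≤ d := by
  induction d with
  | zero => simp [wdist_self]
  | succ d ih => exact (wdist_triangle hs _ (q (i + d)) _).trans (add_le_add ih (hq _))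

end WordMetric

section Geodesic

variable {ψ : FreeGroup ι →* G}

theorem exists_geodesic (hs : Surjective ψ) (x y : G) :
    ∃ p : Fin (wdist ψ x y + 1) → G, IsGeodesic ψ p ∧ p 0 = x ∧ p (Fin.last _) = y := by
  obtain ⟨u, hu, hxy⟩ := exists_wnorm_eq_wlen hs (x⁻¹ * y)
  let l := @FreeGroup.toWord ι (Classical.decEq ι) u
  have hend : x * ψ (FreeGroup.mk (l.take (wdist ψ x y))) = y := by
    rw [show wdist ψ x y = l.length from hu.symm, List.take_length,
      @FreeGroup.mk_toWord ι (Classical.decEq ι), hxy, mul_inv_cancel_left]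
  have hstart : x * ψ (FreeGroup.mk (l.take 0)) = x := by
    rw [List.take_zero, ← FreeGroup.one_eq_mk, map_one, mul_one]
  refine ⟨fun i => x * ψ (FreeGroup.mk (l.take i)), ⟨fun i => ?_, ?_⟩, hstart, hend⟩
  · simpa [wdist_mul_left] using wdist_take_le (ψ := ψ) l i 1
  · simp only [Fin.val_zero, Fin.val_last, hstart, hend]

theorem IsGeodesic.wdist_eq (hs : Surjective ψ) {n : ℕ} {p : Fin (n + 1) → G}
    (hp : IsGeodesic ψ p) (i : Fin (n + 1)) :
    wdist ψ (p 0) (p i) = i ∧ wdist ψ (p i) (p (Fin.last n)) = n - i := by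
  let q : ℕ → G := fun j => p ⟨min j n, by omega⟩
  have hq : ∀ j, wdist ψ (q j) (q (j + 1)) ≤ 1 := fun j => by
    by_cases hj : j < n
    · simpa [q, Nat.min_eq_left hj.le, Nat.min_eq_left hj] using hp.1 ⟨j, hj⟩
    · simp [q, Nat.min_eq_right (not_lt.1 hj), Nat.min_eq_right (Nat.le_succ_of_le (not_lt.1 hj)),
        wdist_self]
  have hqi : q i = p i := by simp [q, Nat.min_eq_left (Nat.lt_succ_iff.1 i.isLt)]
  have hq0 : q 0 = p 0 := rfl
  have hqn : q n = p (Fin.last n) := by simp [q, Fin.last]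
  have h₁ := wdist_add_le_of_wdist_succ_le hs hq 0 i
  have h₂ := wdist_add_le_of_wdist_succ_le hs hq i (n - i)
  have h₃ := wdist_triangle hs (p 0) (p i) (p (Fin.last n))
  rw [Nat.add_sub_cancel' (Nat.lt_succ_iff.1 i.isLt), hqi, hqn] at h₂
  rw [zero_add, hqi, hq0] at h₁
  rw [hp.2] at h₃
  constructor <;> omega

theorem IsGeodesic.wdist_add_wdist (hs : Surjective ψ) {n : ℕ} {p : Fin (n + 1) → G}
    (hp : IsGeodesic ψ p) (i : Fin (n + 1)) :
    (wdist ψ (p 0) (p i) : ℝ) + wdist ψ (p i) (p (Fin.last n)) =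
      wdist ψ (p 0) (p (Fin.last n)) := by
  obtain ⟨h₁, h₂⟩ := hp.wdist_eq hs i
  rw [h₁, h₂, hp.2, Nat.cast_sub (Nat.lt_succ_iff.1 i.isLt)]
  ring

theorem HypConst.nonneg {δ : ℝ} (hyp : HypConst ψ δ) : 0 ≤ δ := by
  have hp : IsGeodesic ψ (fun _ : Fin 1 => (1 : G)) := ⟨fun i => i.elim0, by simp [wdist_self]⟩
  obtain ⟨a, -, hd⟩ := (hyp 0 0 0 _ _ _ hp hp hp rfl rfl rfl).1 0
  exact (Nat.cast_nonneg _).trans hd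

end Geodesic

section GromovProduct

variable {ψ : FreeGroup ι →* G}

noncomputable def gromovProduct (ψ : FreeGroup ι →* G) (w x y : G) : ℝ :=
  ((wdist ψ w x : ℝ) + wdist ψ w y - wdist ψ x y) / 2

theorem cast_wdist_triangle (hs : Surjective ψ) (x y z : G) :
    (wdist ψ x z : ℝ) ≤ wdist ψ x y + wdist ψ y z := by
  exact_mod_cast wdist_triangle hs x y z

theorem cast_wdist_comm (hs : Surjective ψ) (x y : G) : (wdist ψ x y : ℝ) = wdist ψ y x := by
  rw [wdist_comm hs]

theorem gromovProduct_comm (hs : Surjective ψ) (w x y : G) :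
    gromovProduct ψ w x y = gromovProduct ψ w y x := by
  simp only [gromovProduct, cast_wdist_comm hs x y]
  ring

theorem gromovProduct_nonneg (hs : Surjective ψ) (w x y : G) : 0 ≤ gromovProduct ψ w x y := by
  have := cast_wdist_triangle hs x w y
  rw [cast_wdist_comm hs x w] at this
  unfold gromovProduct
  linarith

theorem gromovProduct_le_wdist (hs : Surjective ψ) (w x y : G) :
    gromovProduct ψ w x y ≤ wdist ψ w x := by
  have := cast_wdist_triangle hs w x y
  unfold gromovProduct
  linarith

theorem gromovProduct_add_gromovProduct (hs : Surjective ψ) (w x y : G) :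
    gromovProduct ψ w x y + gromovProduct ψ x w y = wdist ψ w x := by
  simp only [gromovProduct, cast_wdist_comm hs x w]
  ring

theorem gromovProduct_self_left (w y : G) : gromovProduct ψ w w y = 0 := by
  simp [gromovProduct, wdist_self]

theorem gromovProduct_le_of_between (hs : Surjective ψ) {x y a : G}
    (h : (wdist ψ x a : ℝ) + wdist ψ a y = wdist ψ x y) (w : G) :
    gromovProduct ψ w x y ≤ wdist ψ w a := by
  have h₁ := cast_wdist_triangle hs w a x
  have h₂ := cast_wdist_triangle hs w a y
  rw [cast_wdist_comm hs a x] at h₁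
  unfold gromovProduct
  linarith

/-- Thin triangles: on a geodesic from `x` to `y`, the point at distance `⌈(y|w)_x⌉` from `x` is
within `δ` of a geodesic from `w` to `x` or from `y` to `w`, and either way it lies
`(x|y)_w + 2δ + 1`-close to `w`. -/
theorem exists_wdist_le_gromovProduct (hs : Surjective ψ) {δ : ℝ} (hyp : HypConst ψ δ) (w : G)
    {n : ℕ} {q : Fin (n + 1) → G} (hq : IsGeodesic ψ q) :
    ∃ i, (wdist ψ w (q i) : ℝ) ≤ gromovProduct ψ w (q 0) (q (Fin.last n)) + 2 * δ + 1 := by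
  set x := q 0
  set y := q (Fin.last n)
  obtain ⟨p, hp, hp0, hpl⟩ := exists_geodesic hs w x
  obtain ⟨r, hr, hr0, hrl⟩ := exists_geodesic hs y w
  have hxy : (wdist ψ x y : ℝ) = n := by rw [hq.2]
  set c := gromovProduct ψ x y w with hc
  have hc₀ : 0 ≤ c := gromovProduct_nonneg hs x y w
  have hjn : ⌈c⌉₊ ≤ n := Nat.ceil_le.2 (hxy ▸ gromovProduct_le_wdist hs x y w)
  have hcj : c ≤ ⌈c⌉₊ := Nat.le_ceil c
  have hjc : (⌈c⌉₊ : ℝ) < c + 1 := Nat.ceil_lt_add_one hc₀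
  set j : Fin (n + 1) := ⟨⌈c⌉₊, Nat.lt_succ_of_le hjn⟩
  have hxj : (wdist ψ x (q j) : ℝ) = ⌈c⌉₊ := by rw [(hq.wdist_eq hs j).1]
  have hjy : (wdist ψ (q j) y : ℝ) = n - ⌈c⌉₊ := by
    rw [(hq.wdist_eq hs j).2, Nat.cast_sub hjn]
  obtain ⟨-, hthin, -⟩ := hyp _ _ _ p q r hp hq hr hpl hr0.symm (hrl.trans hp0.symm)
  obtain ⟨a, ha, hda⟩ := hthin j
  have hwj := cast_wdist_triangle hs w a (q j)
  have hsymm := cast_wdist_comm hs (q j) a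
  refine ⟨j, ?_⟩
  simp only [gromovProduct] at hc ⊢
  rcases ha with ⟨s, rfl⟩ | ⟨s, rfl⟩
  · have hs' := hr.wdist_add_wdist hs s
    rw [hr0, hrl] at hs'
    have := cast_wdist_triangle hs y (r s) (q j)
    linarith [cast_wdist_comm hs y (q j), cast_wdist_comm hs (r s) w, cast_wdist_comm hs x w,
      cast_wdist_comm hs y w]
  · have hs' := hp.wdist_add_wdist hs s
    rw [hp0, hpl] at hs'
    have := cast_wdist_triangle hs x (p s) (q j)
    linarith [cast_wdist_comm hs (p s) x, cast_wdist_comm hs x w, cast_wdist_comm hs y w]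

theorem gromovProduct_four_point (hs : Surjective ψ) {δ : ℝ} (hyp : HypConst ψ δ)
    (w x y z : G) :
    min (gromovProduct ψ w x y) (gromovProduct ψ w y z) ≤ gromovProduct ψ w x z + 3 * δ + 1 := by
  obtain ⟨q, hq, hq0, hql⟩ := exists_geodesic hs x z
  obtain ⟨q₂, hq₂, hq₂0, hq₂l⟩ := exists_geodesic hs z y
  obtain ⟨q₃, hq₃, hq₃0, hq₃l⟩ := exists_geodesic hs y x
  obtain ⟨i, hi⟩ := exists_wdist_le_gromovProduct hs hyp w hq
  rw [hq0, hql] at hi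
  obtain ⟨hthin, -, -⟩ :=
    hyp _ _ _ q q₂ q₃ hq hq₂ hq₃ (hql.trans hq₂0.symm) (hq₂l.trans hq₃0.symm) (hq₃l.trans hq0.symm)
  obtain ⟨a, ha, hda⟩ := hthin i
  have hwa := cast_wdist_triangle hs w (q i) a
  rcases ha with ⟨s, rfl⟩ | ⟨s, rfl⟩
  · have h := gromovProduct_le_of_between hs (hq₂0 ▸ hq₂l ▸ hq₂.wdist_add_wdist hs s) w
    rw [gromovProduct_comm hs w z y] at h
    exact (min_le_right _ _).trans (by linarith)
  · have h := gromovProduct_le_of_between hs (hq₃0 ▸ hq₃l ▸ hq₃.wdist_add_wdist hs s) w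
    rw [gromovProduct_comm hs w y x] at h
    exact (min_le_left _ _).trans (by linarith)

end GromovProduct

section Chain

variable {ψ : FreeGroup ι →* G}

theorem gromovProduct_self_right (w y : G) :
    gromovProduct ψ w y y = wdist ψ w y := by
  simp only [gromovProduct, wdist_self]
  ring

/-- Induction along the chain: the previous segment makes a large Gromov product with the next
one at `x (j + 1)`, so the four-point condition transfers the small turn to the base point. -/
theorem gromovProduct_chain_le (hs : Surjective ψ) {δ : ℝ} (hyp : HypConst ψ δ) {x : ℕ → G}
    {t : ℕ} {β γ : ℝ} (hγ : 0 ≤ γ) (hβ : 2 * (γ + 3 * δ + 1) < β)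
    (hstep : ∀ j < t, β < wdist ψ (x j) (x (j + 1)))
    (hturn : ∀ j, j + 1 < t → gromovProduct ψ (x (j + 1)) (x j) (x (j + 2)) ≤ γ) :
    ∀ j < t, gromovProduct ψ (x j) (x 0) (x (j + 1)) ≤ γ + 3 * δ + 1 := by
  intro j
  induction j with
  | zero =>
    intro _
    rw [gromovProduct_self_left]
    linarith [hyp.nonneg]
  | succ j ih =>
    intro hj
    have hback := gromovProduct_add_gromovProduct hs (x (j + 1)) (x j) (x 0)
    rw [gromovProduct_comm hs (x j), cast_wdist_comm hs] at hback
    have hfour := gromovProduct_four_point hs hyp (x (j + 1)) (x j) (x 0) (x (j + 2))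
    have := ih (by omega)
    have := hstep j (by omega)
    have := hturn j hj
    rcases min_le_iff.1 (hfour.trans (show _ ≤ γ + 3 * δ + 1 by linarith)) with h | h
    · linarith
    · exact h

theorem ne_of_gromovProduct_chain (hs : Surjective ψ) {δ : ℝ} (hyp : HypConst ψ δ) {x : ℕ → G}
    {t : ℕ} (ht : 0 < t) {β γ : ℝ} (hγ : 0 ≤ γ) (hβ : 2 * (γ + 3 * δ + 1) < β)
    (hstep : ∀ j < t, β < wdist ψ (x j) (x (j + 1)))
    (hturn : ∀ j, j + 1 < t → gromovProduct ψ (x (j + 1)) (x j) (x (j + 2)) ≤ γ) :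
    x 0 ≠ x t := by
  intro hloop
  have hlast := gromovProduct_chain_le hs hyp hγ hβ hstep hturn (t - 1) (by omega)
  rw [Nat.sub_add_cancel ht, hloop, gromovProduct_self_right] at hlast
  have := hstep (t - 1) (by omega)
  rw [Nat.sub_add_cancel ht] at this
  linarith [hyp.nonneg]

theorem gromovProduct_le_of_wdist_le {x y z : G} {a b : ℕ} (hs : Surjective ψ)
    (hxy : wdist ψ x y ≤ a) (hyz : wdist ψ y z ≤ b) (hxz : 7 * (a + b) < 8 * wdist ψ x z) :
    gromovProduct ψ y x z ≤ (a + b : ℝ) / 16 := by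
  have hxy' : (wdist ψ y x : ℝ) ≤ a := by rw [cast_wdist_comm hs]; exact_mod_cast hxy
  have hyz' : (wdist ψ y z : ℝ) ≤ b := by exact_mod_cast hyz
  have hxz' : 7 * ((a : ℝ) + b) < 8 * wdist ψ x z := by exact_mod_cast hxz
  unfold gromovProduct
  linarith

end Chain

theorem exists_partition {h N : ℕ} (hh : 0 < h) (hN : h ≤ N) :
    ∃ (t : ℕ) (p : ℕ → ℕ), 0 < t ∧ p 0 = 0 ∧ p t = N ∧ (∀ j ≤ t, p j ≤ N) ∧
      (∀ j < t, p j + h ≤ p (j + 1) ∧ p (j + 1) ≤ p j + 2 * h) ∧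
      ∀ j, j + 1 < t → p (j + 2) ≤ p j + 3 * h := by
  set t := N / h
  have ht : 0 < t := Nat.div_pos hN hh
  have htN : t * h ≤ N := Nat.div_mul_le_self N h
  have hNt : N < t * h + h := Nat.lt_div_mul_add hh
  refine ⟨t, fun j => if j < t then j * h else N, ht, by simp [ht], by simp, fun j hj => ?_,
    fun j hj => ?_, fun j hj => ?_⟩
  · have : j * h ≤ t * h := Nat.mul_le_mul_right h hj
    dsimp only
    split_ifs <;> omega
  · have e₁ : (j + 1) * h = j * h + h := by ring
    have e₂ : j + 1 = t → t * h = j * h + h := fun h' => h' ▸ e₁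
    dsimp only
    split_ifs <;> omega
  · have e₁ : (j + 1) * h = j * h + h := by ring
    have e₂ : (j + 2) * h = j * h + 2 * h := by ring
    have e₃ : j + 2 = t → t * h = j * h + 2 * h := fun h' => h' ▸ e₂
    dsimp only
    split_ifs <;> omega

section Filling

variable {ψ : FreeGroup ι →* G}

theorem exists_short_window (hs : Surjective ψ) {δ : ℝ} (hyp : HypConst ψ δ) {g : ℕ → G}
    {N h : ℕ} (hlip : ∀ i L, wdist ψ (g i) (g (i + L)) ≤ L) (hloop : g N = g 0)
    (hh : 12 * δ + 4 < h) (hN : h ≤ N) :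
    ∃ i L, i + L ≤ N ∧ h ≤ L ∧ L ≤ 3 * h ∧ 8 * wdist ψ (g i) (g (i + L)) ≤ 7 * L := by
  by_contra! hlong
  have hh₀ : 0 < h := by
    have := hyp.nonneg
    exact_mod_cast (show (0 : ℝ) < h by linarith)
  obtain ⟨t, p, ht, hp0, hpt, hpN, hgap, hpair⟩ := exists_partition hh₀ hN
  have hwin : ∀ j k, j < k → k ≤ t → p k ≤ p j + 3 * h → h ≤ p k - p j →
      7 * (p k - p j) < 8 * wdist ψ (g (p j)) (g (p k)) := fun j k hjk hk h3 h1 => by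
    have := hlong (p j) (p k - p j)
    rw [Nat.add_sub_cancel' (by omega)] at this
    exact this (hpN k hk) h1 (by omega)
  refine ne_of_gromovProduct_chain hs hyp (x := fun j => g (p j)) ht (β := 7 * h / 8)
    (γ := 3 * h / 16) (by positivity) (by linarith) (fun j hj => ?_) (fun j hj => ?_)
    (by rw [hp0, hpt, hloop])
  · have := hgap j hj
    have := hwin j (j + 1) (by omega) hj (by omega) (by omega)
    have : 7 * h < 8 * wdist ψ (g (p j)) (g (p (j + 1))) := by omega
    have : (7 * h : ℝ) < 8 * wdist ψ (g (p j)) (g (p (j + 1))) := by exact_mod_cast this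
    linarith
  · have h₁ : p j + h ≤ p (j + 1) := (hgap j (by omega)).1
    have h₂ : p (j + 1) + h ≤ p (j + 2) := (hgap (j + 1) hj).1
    have h₃ := hpair j hj
    have hlong₂ := hwin j (j + 2) (by omega) hj h₃ (by omega)
    obtain ⟨a, ha⟩ := Nat.exists_eq_add_of_le (show p j ≤ p (j + 1) by omega)
    obtain ⟨b, hb⟩ := Nat.exists_eq_add_of_le (show p (j + 1) ≤ p (j + 2) by omega)
    have hda : wdist ψ (g (p j)) (g (p (j + 1))) ≤ a := by rw [ha]; exact hlip _ a
    have hdb : wdist ψ (g (p (j + 1))) (g (p (j + 2))) ≤ b := by rw [hb]; exact hlip _ b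
    have hturn := gromovProduct_le_of_wdist_le hs hda hdb (by omega)
    refine hturn.trans ?_
    have : (a + b : ℝ) ≤ 3 * h := by exact_mod_cast (show a + b ≤ 3 * h by omega)
    linarith

/-- The window `v` of length `L ≤ 3h` is replaced by a geodesic word `u`: the relator `u⁻¹ v` has
length at most `L + 7L/8 ≤ 45h/8`, and `w` loses at least `L/8 ≥ h/8` letters. -/
theorem exists_shortening (hs : Surjective ψ) {δ : ℝ} (hyp : HypConst ψ δ) {m h : ℕ}
    (hh : 12 * δ + 4 < h) (hm : 45 * h ≤ 8 * m) {w : FreeGroup ι} (hw : ψ w = 1)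
    (hwm : m < wnorm w) :
    ∃ w' c r : FreeGroup ι,
      w = w' * (c⁻¹ * r * c) ∧ r ∈ triv ψ m ∧ 8 * wnorm w' + h ≤ 8 * wnorm w := by
  let l := @FreeGroup.toWord ι (Classical.decEq ι) w
  have hlw : FreeGroup.mk l = w := @FreeGroup.mk_toWord ι (Classical.decEq ι) w
  have hN : l.length = wnorm w := rfl
  let g : ℕ → G := fun i => ψ (FreeGroup.mk (l.take i))
  have hloop : g l.length = g 0 := by
    simp only [g, List.take_length, hlw, hw, List.take_zero, ← FreeGroup.one_eq_mk, map_one]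
  obtain ⟨i, L, hiL, hhL, hL3, hwin⟩ :=
    exists_short_window hs hyp (wdist_take_le l) hloop hh (by omega)
  set p := FreeGroup.mk (l.take i)
  set v := FreeGroup.mk ((l.drop i).take L)
  set q := FreeGroup.mk (l.drop (i + L))
  have hpvq : w = p * v * q := by
    rw [← mk_take_add, FreeGroup.mul_mk, List.take_append_drop, hlw]
  obtain ⟨u, hu, hψu⟩ := exists_wnorm_eq_wlen hs ((g i)⁻¹ * g (i + L))
  have hψv : ψ v = ψ u := by
    rw [hψu, show g (i + L) = ψ (p * v) from congrArg ψ (mk_take_add l i L), map_mul,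
      inv_mul_cancel_left]
  have hu7 : 8 * wnorm u ≤ 7 * L := hu ▸ hwin
  have hp : wnorm p ≤ i := (wnorm_mk_le _).trans (List.length_take_le _ _)
  have hv : wnorm v ≤ L := (wnorm_mk_le _).trans (List.length_take_le _ _)
  have hq : wnorm q ≤ l.length - (i + L) := (wnorm_mk_le _).trans (List.length_drop).le
  refine ⟨p * u * q, q, u⁻¹ * v, by rw [hpvq]; group, ⟨?_, ?_⟩, ?_⟩
  · have := wnorm_mul_le u⁻¹ v
    rw [wnorm_inv] at this
    omega
  · rw [map_mul, map_inv, hψv, inv_mul_cancel]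
  · have := wnorm_mul_le (p * u) q
    have := wnorm_mul_le p u
    omega

theorem exists_areaLe_of_hypConst (hs : Surjective ψ) {δ : ℝ} (hyp : HypConst ψ δ) {m h : ℕ}
    (hh : 12 * δ + 4 < h) (hm : 45 * h ≤ 8 * m) {w : FreeGroup ι} (hw : ψ w = 1) :
    ∃ A, AreaLe (triv ψ m) w A ∧ h * A ≤ h + 8 * wnorm w := by
  have hh₀ : 0 < h := by exact_mod_cast (show (0 : ℝ) < h by linarith [hyp.nonneg])
  induction hN : wnorm w using Nat.strong_induction_on generalizing w with
  | _ N ih =>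
    by_cases hwm : wnorm w ≤ m
    · exact ⟨1, .of_mem ⟨hwm, hw⟩, by omega⟩
    obtain ⟨w', c, r, rfl, hr, hw'⟩ := exists_shortening hs hyp hh hm hw (by omega)
    have hψw' : ψ w' = 1 := by simpa [hr.2] using hw
    obtain ⟨A, hA, hAw⟩ := ih _ (by omega) hψw' rfl
    exact ⟨A + 1, hA.mul (.conj c (.of_mem hr)), by rw [Nat.mul_succ]; omega⟩

theorem exists_linear_areaLe_of_hypConst (hs : Surjective ψ) {δ : ℝ} (hyp : HypConst ψ δ) :
    ∃ M : ℕ, ∀ m ≥ M, ∀ w : FreeGroup ι, ψ w = 1 →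
      ∃ A, AreaLe (triv ψ m) w A ∧ m * A ≤ 2 * m + 120 * wnorm w := by
  refine ⟨8 * (12 * ⌈δ⌉₊ + 5), fun m hm w hw => ?_⟩
  have hh : 12 * ⌈δ⌉₊ + 5 ≤ m / 8 := (Nat.le_div_iff_mul_le (by norm_num)).2 (by omega)
  have hδ : 12 * δ + 4 < (m / 8 : ℕ) := by
    have : ((12 * ⌈δ⌉₊ + 5 : ℕ) : ℝ) ≤ (m / 8 : ℕ) := by exact_mod_cast hh
    push_cast at this
    linarith [Nat.le_ceil δ]
  obtain ⟨A, hA, hAw⟩ := exists_areaLe_of_hypConst hs hyp hδ (m := m) (by omega) hw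
  refine ⟨A, hA, ?_⟩
  calc m * A ≤ 15 * (m / 8) * A := Nat.mul_le_mul_right A (by omega)
    _ = 15 * ((m / 8) * A) := by ring
    _ ≤ 2 * m + 120 * wnorm w := by omega

end Filling

theorem exists_subset_normalClosure_of_finite {H : Type*} [Group H] {R : ℕ → Set H}
    (hR : Monotone R) {s : Set H} (hfin : s.Finite)
    (hs : s ⊆ Subgroup.normalClosure (⋃ i, R i)) :
    ∃ j, s ⊆ Subgroup.normalClosure (R j) := by
  set N : ℕ → Subgroup H := fun i => Subgroup.normalClosure (R i)
  have hN : Monotone N := fun i j hij => Subgroup.normalClosure_mono (hR hij)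
  have hle : Subgroup.normalClosure (⋃ i, R i) ≤ ⨆ i, N i :=
    Subgroup.normalClosure_le_normal <| Set.iUnion_subset fun i =>
      Subgroup.subset_normalClosure.trans (le_iSup N i)
  have hsub : (hfin.toFinset : Set H) ⊆ ⋃ i, (N i : Set H) := by
    rw [hfin.coe_toFinset, ← Subgroup.coe_iSup_of_directed hN.directed_le]
    exact hs.trans hle
  obtain ⟨j, hj⟩ :=
    (hN.directed_le.mono_comp _ fun _ _ h => h).exists_mem_subset_of_finset_subset_biUnion hsub
  exact ⟨j, hfin.coe_toFinset ▸ hj⟩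

theorem isoSpec_le_of_forall_area_le {φ : FreeGroup ι →* G} {k m n b : ℕ}
    (h : ∀ w ∈ Subgroup.normalClosure (triv φ k), wnorm w ≤ n → area (triv φ m) w ≤ b) :
    isoSpec φ k m n ≤ b := by
  refine csSup_le ⟨_, 1, ⟨Subgroup.one_mem _, by simp [wnorm_one]⟩, rfl⟩ ?_
  rintro _ ⟨w, ⟨hw, hwn⟩, rfl⟩
  exact h w hw hwn

theorem exists_isoSpecR_le_of_limitOfHyperbolic [Finite ι] {φ : FreeGroup ι →* G}
    (hlim : LimitOfHyperbolic φ) (k : ℕ) :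
    ∃ D : ℕ, ∀ m n : ℕ, D ≤ m → isoSpecR φ k m n ≤ D * n / m + D := by
  obtain ⟨-, R, hR, hker, hhyp⟩ := hlim
  obtain ⟨j, hj⟩ := exists_subset_normalClosure_of_finite (fun _ _ => hR _ _)
    ((finite_setOf_wnorm_le k).subset fun w (hw : w ∈ triv φ k) => hw.1)
    fun w (hw : w ∈ triv φ k) => hker ▸ hw.2
  obtain ⟨δ, -, hyp⟩ := hhyp j
  obtain ⟨M, hM⟩ := exists_linear_areaLe_of_hypConst (QuotientGroup.mk'_surjective _) hyp
  refine ⟨M + 120, fun m n hm => ?_⟩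
  have hrel : triv (QuotientGroup.mk' (Subgroup.normalClosure (R j))) m ⊆ triv φ m :=
    fun w ⟨hwm, hw⟩ => ⟨hwm, hker.ge (Subgroup.normalClosure_mono (Set.subset_iUnion R j)
      ((QuotientGroup.eq_one_iff w).1 hw))⟩
  have hspec : isoSpec φ k m n ≤ (2 * m + 120 * n) / m :=
    isoSpec_le_of_forall_area_le fun w hw hwn => by
      have hwj := Subgroup.normalClosure_le_normal hj hw
      obtain ⟨A, hA, hAw⟩ := hM m (by omega) w ((QuotientGroup.eq_one_iff w).2 hwj)
      refine (area_le (hA.mono hrel)).trans ((Nat.le_div_iff_mul_le (by omega)).2 ?_)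
      rw [mul_comm]
      omega
  have hm₀ : (0 : ℝ) < m := by exact_mod_cast (show 0 < m by omega)
  calc isoSpecR φ k m n ≤ ((2 * m + 120 * n) / m : ℕ) := Nat.cast_le.2 hspec
    _ ≤ ((2 * m + 120 * n : ℕ) : ℝ) / m := Nat.cast_div_le
    _ = 120 * n / m + 2 := by push_cast; field_simp; ring
    _ ≤ (M + 120 : ℕ) * n / m + (M + 120 : ℕ) := by
      push_cast
      gcongr <;> linarith

theorem linSpec_specLE {f : ℕ → ℕ → ℕ → ℝ} (hf : ∀ k m n, 0 ≤ f k m n) : SpecLE linSpec f := by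
  refine ⟨1, one_pos, fun k m n _ _ _ _ => ?_⟩
  have := hf k m n
  simp only [linSpec, Nat.cast_one, one_mul]
  linarith

theorem exists_linear_bound_of_specLE {u : ℕ → ℕ → ℝ} {f : ℕ → ℕ → ℕ → ℝ}
    (h : SpecLE (fun _ m n => u m n) f)
    (hf : ∀ k, ∃ D : ℕ, ∀ m n : ℕ, D ≤ m → f k m n ≤ D * n / m + D) :
    ∃ c E : ℕ, 0 < c ∧ ∀ m n : ℕ, E ≤ m → 0 < n → u (c * m) n ≤ E * n / m + E := by
  obtain ⟨C, hC, hu⟩ := h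
  obtain ⟨D, hfD⟩ := hf C
  refine ⟨C, C * C * D + C * D + C + D, hC, fun m n hm hn => ?_⟩
  have s₁ := hu 1 m n one_pos (by omega) hn (by omega)
  have s₂ := mul_le_mul_of_nonneg_left (hfD m (C * n) (by omega)) (Nat.cast_nonneg C : (0 : ℝ) ≤ C)
  rw [mul_one] at s₁
  have hcoef :
      ((C * C * D + C : ℕ) : ℝ) * (n / m) ≤ ((C * C * D + C * D + C + D : ℕ) : ℝ) * (n / m) :=
    mul_le_mul_of_nonneg_right (by exact_mod_cast (by omega)) (by positivity)
  have hconst : ((C * D + C : ℕ) : ℝ) ≤ ((C * C * D + C * D + C + D : ℕ) : ℝ) := by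
    exact_mod_cast (by omega)
  push_cast at s₁ s₂ hcoef hconst ⊢
  have e₁ : (C : ℝ) * (D * (C * n) / m) = C * C * D * (n / m) := by ring
  have e₂ : (C : ℝ) * n / m = C * (n / m) := by ring
  have e₃ : ((C : ℝ) * C * D + C * D + C + D) * n / m = (C * C * D + C * D + C + D) * (n / m) := by
    ring
  rw [mul_add, e₁] at s₂
  rw [e₂] at s₁
  rw [e₃]
  linarith

theorem specLE_linSpec_of_linear_bound {f : ℕ → ℕ → ℕ → ℝ} {u : ℕ → ℕ → ℝ}
    (h : SpecLE f fun _ m n => u m n) {c E : ℕ} (hc : 0 < c)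
    (hu : ∀ m n : ℕ, E ≤ m → 0 < n → u (c * m) n ≤ E * n / m + E) : SpecLE f linSpec := by
  obtain ⟨C₁, hC₁, hf⟩ := h
  have hCE : C₁ * (E + 1) ≤ C₁ * c * (E + 1) :=
    Nat.mul_le_mul_right _ (Nat.le_mul_of_pos_right C₁ hc)
  have hC : C₁ ≤ C₁ * c * (E + 1) := (Nat.le_mul_of_pos_right C₁ (Nat.succ_pos E)).trans hCE
  refine ⟨C₁ * c * (E + 1), by positivity, fun k m n hk hm hn hkm => ?_⟩
  have hm' : m ≤ c * ((E + 1) * m) :=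
    (Nat.le_mul_of_pos_left m (show 0 < c * (E + 1) by positivity)).trans_eq (mul_assoc _ _ _)
  have s₁ := hf k (c * ((E + 1) * m)) n hk (by positivity) hn
    ((Nat.mul_le_mul_right k hC).trans (hkm.trans hm'))
  have s₂ := hu ((E + 1) * m) (C₁ * n) (by nlinarith) (by positivity)
  have hm₀ : (0 : ℝ) < m := by exact_mod_cast hm
  have b₁ : (C₁ * n : ℝ) / (c * ((E + 1) * m) : ℕ) ≤ C₁ * (n / m) := by
    rw [← mul_div_assoc]
    exact div_le_div_of_nonneg_left (by positivity) hm₀ (by exact_mod_cast hm')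
  have b₂ : (E * (C₁ * n : ℕ) : ℝ) / ((E + 1) * m : ℕ) ≤ C₁ * (n / m) := by
    rw [div_le_iff₀ (by positivity)]
    push_cast
    field_simp
    nlinarith
  have hu' := mul_le_mul_of_nonneg_left (show u (c * ((E + 1) * m)) (C₁ * n) ≤ C₁ * (n / m) + E by
    linarith) (Nat.cast_nonneg C₁ : (0 : ℝ) ≤ C₁)
  rw [show C₁ * c * (E + 1) * m = C₁ * (c * ((E + 1) * m)) by ring]
  generalize C₁ * c * (E + 1) = C at hC hCE ⊢
  have hX : (0 : ℝ) ≤ n / m := by positivity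
  have k₁ : ((C₁ * C₁ : ℕ) : ℝ) * (n / m) ≤ ((C * C : ℕ) : ℝ) * (n / m) :=
    mul_le_mul_of_nonneg_right (by exact_mod_cast Nat.mul_le_mul hC hC) hX
  have k₂ : (C₁ : ℝ) * (n / m) ≤ C * (n / m) := mul_le_mul_of_nonneg_right (by exact_mod_cast hC) hX
  have k₃ : ((C₁ * (E + 1) : ℕ) : ℝ) ≤ C := by exact_mod_cast hCE
  simp only [linSpec]
  push_cast at k₁ k₃ ⊢
  have e₁ : (C : ℝ) * (C * n / m) = C * C * (n / m) := by ring
  have e₂ : (C : ℝ) * n / m = C * (n / m) := by ring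
  rw [e₁, e₂]
  linarith

/-- If `G` is a limit of hyperbolic groups and its isoperimetric
spectrum is essentially independent of `k` (equivalent to a function in `𝓕` depending
on `m` and `n` only), then the spectrum is linear. -/
theorem linear_isoSpec_of_limitOfHyperbolic_of_indep {G : Type} [Group G] {a : ℕ}
    (φ : FreeGroup (Fin a) →* G) (hlim : LimitOfHyperbolic φ)
    (hindep : ∃ g : ℕ → ℕ → ℝ,
      (∀ n : ℕ, 0 < n → ∀ m m' : ℕ, 0 < m → m ≤ m' → g m' n ≤ g m n) ∧
      (∀ m : ℕ, 0 < m → ∀ n n' : ℕ, 0 < n → n ≤ n' → g m n ≤ g m n') ∧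
      SpecEquiv (isoSpecR φ) (fun _ m n => g m n)) :
    SpecEquiv (isoSpecR φ) linSpec := by
  obtain ⟨g, -, -, hfg, hgf⟩ := hindep
  obtain ⟨c, E, hc, hg⟩ :=
    exists_linear_bound_of_specLE hgf (exists_isoSpecR_le_of_limitOfHyperbolic hlim)
  exact ⟨specLE_linSpec_of_linear_bound hfg hc hg, linSpec_specLE fun _ _ _ => Nat.cast_nonneg _⟩

end IsoSpecPaper
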